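/- Let R be a Noetherian ring, a ⊆ R an ideal, and X an a-torsion R-module. If the submodule (0 :_X a) = {x ∈ X : a x = 0} is Artinian, then X is Artinian (Melkersson's Lemma, as used in the paper). -/

import Mathlib

open CategoryTheory CategoryTheory.Limits Opposite

/-- `ℕ` acts on `ℤ`-degrees by addition (used to grade modules over `ℕ`-graded rings). -/
instance : VAdd ℕ ℤ := ⟨fun n z => (n : ℤ) + z⟩

noncomputable section

/-- The directed system `M ⧸ a^t • M`, `t : ℕ`. -/
def genLCModDiagram {R : Type} [CommRing R] (a : Ideal R) (M : Type) [AddCommGroup M]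
    [Module R M] : ℕᵒᵖ ⥤ ModuleCat R where
  obj t := ModuleCat.of R (M ⧸ (a ^ (unop t) • ⊤ : Submodule R M))
  map {t t'} w := ModuleCat.ofHom (Submodule.mapQ (a ^ (unop t) • ⊤) (a ^ (unop t') • ⊤) LinearMap.id
    (Submodule.smul_mono (Ideal.pow_le_pow_right w.unop.down.down) le_rfl))
  map_id t := by
    apply ModuleCat.hom_ext
    apply Submodule.linearMap_qext
    rfl
  map_comp {t t' t''} f g := by
    apply ModuleCat.hom_ext
    apply Submodule.linearMap_qext
    ext x
    simp

/-- Generalized local cohomology `H^i_a(M, -)`, the direct limit of `Ext^i(M/a^t M, -)`. -/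
def genLocalCohomology {R : Type} [CommRing R] (a : Ideal R) (M : Type) [AddCommGroup M]
    [Module R M] (i : ℕ) : ModuleCat R ⥤ ModuleCat R :=
  colimit ((genLCModDiagram a M).op ⋙ Ext R (ModuleCat R) i)

/-- `H^i_a(M,N)` as an object of `ModuleCat R`. -/
abbrev GLC {R : Type} [CommRing R] (a : Ideal R) (M : Type) [AddCommGroup M] [Module R M]
    (i : ℕ) (N : Type) [AddCommGroup N] [Module R N] : ModuleCat R :=
  (genLocalCohomology a M i).obj (ModuleCat.of R N)

/-- The `a`-torsion functor `Γ_a` : the submodule of elements killed by some power of `a`. -/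
def torsionGamma {R : Type} [CommRing R] (a : Ideal R) (X : Type) [AddCommGroup X]
    [Module R X] : Submodule R X :=
  ⨆ n : ℕ, Submodule.torsionBySet R X ((a ^ n : Ideal R) : Set R)

/-- `M` has projective dimension at most `n`: all `Ext^i(M, -)` for `i > n` vanish. -/
def HasProjDimLE {R : Type} [CommRing R] (M : Type) [AddCommGroup M] [Module R M]
    (n : ℕ) : Prop :=
  ∀ i : ℕ, n < i → ∀ N : ModuleCat R,
    Subsingleton (((Ext R (ModuleCat R) i).obj (op (ModuleCat.of R M))).obj N)

/-- The irrelevant ideal `R_+` of an `ℕ`-graded ring. -/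
def irrIdeal {R : Type} [CommRing R] (𝒜 : ℕ → AddSubgroup R) [GradedRing 𝒜] : Ideal R :=
  (HomogeneousIdeal.irrelevant 𝒜).toIdeal

/-- The ideal `m₀R` of `R` generated by the maximal ideal of the base ring `R₀ = 𝒜 0`. -/
def mzR {R : Type} [CommRing R] (𝒜 : ℕ → AddSubgroup R) [GradedRing 𝒜]
    [IsLocalRing (𝒜 0)] : Ideal R :=
  Ideal.span (Subtype.val '' ((IsLocalRing.maximalIdeal (𝒜 0) : Ideal (𝒜 0)) : Set (𝒜 0)))


/-! For `a = (x)` principal and a descending chain `B₀ ⊇ B₁ ⊇ ⋯` in `X`, the submodules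
`x ^ j • Bₙ ∩ (0 :_X x)` of the Artinian module `(0 :_X x)` are antitone in both `n` and `j`, so they
stabilise uniformly in `j`. Comparing `Bₚ` with `Bₙ` on the elements killed by `x ^ k`, by induction
on `k`, then shows `Bₙ = Bₚ`, since every element is killed by some `x ^ k`.

A general `a` is finitely generated, and if `a = I + J` then `(0 :_X I)` is `J`-torsion with
`(0 :_{(0 :_X I)} J)` embedded in `(0 :_X a)`; so `(0 :_X I)` is Artinian, and then so is `X`. -/

open Pointwise Submodule

theorem WellFoundedLT.antitone_chain_condition₂ {α : Type*} [PartialOrder α] [WellFoundedLT α]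
    (F : ℕ → ℕ → α) (hF : ∀ ⦃n n' j j'⦄, n ≤ n' → j ≤ j' → F n' j' ≤ F n j) :
    ∃ p, ∀ n, p ≤ n → ∀ j, F n j = F p j := by
  obtain ⟨c, hc⟩ := WellFoundedLT.antitone_chain_condition (f := fun n => F n n)
    fun n n' h => hF h h
  have corner : ∀ n j, c ≤ n → c ≤ j → F n j = F c c := fun n j hn hj =>
    le_antisymm (hF hn hj) <| (hc (max n j) (hn.trans (le_max_left _ _))).le.trans
      (hF (le_max_left _ _) (le_max_right _ _))
  choose q hq using fun j => WellFoundedLT.antitone_chain_condition (f := fun n => F n j)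
    fun n n' h => hF h le_rfl
  refine ⟨max c ((Finset.range c).sup q), fun n hn j => ?_⟩
  have hcn : c ≤ n := (le_max_left _ _).trans hn
  rcases lt_or_ge j c with hj | hj
  · have hqj : q j ≤ max c ((Finset.range c).sup q) :=
      (Finset.le_sup (Finset.mem_range.2 hj)).trans (le_max_right _ _)
    exact (hq j n (hqj.trans hn)).symm.trans (hq j _ hqj)
  · exact (corner n j hcn hj).trans (corner _ j (le_max_left _ _) hj).symm

section Melkersson

variable {R : Type*} [CommRing R] {X : Type*} [AddCommGroup X] [Module R X]

theorem Submodule.le_of_pow_smul_inf_torsionBy_le {x : R} {B B' : Submodule R X}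
    (htor : ∀ b ∈ B, ∃ k : ℕ, x ^ k • b = 0) (hB' : B' ≤ B)
    (h : ∀ j : ℕ, x ^ j • B ⊓ torsionBy R X x ≤ x ^ j • B') : B ≤ B' := by
  suffices key : ∀ k : ℕ, B ⊓ torsionBy R X (x ^ k) ≤ B' by
    intro b hb
    obtain ⟨k, hk⟩ := htor b hb
    exact key k ⟨hb, hk⟩
  intro k
  induction k with
  | zero =>
    rintro b ⟨-, hb⟩
    rw [SetLike.mem_coe, mem_torsionBy_iff, pow_zero, one_smul] at hb
    exact hb ▸ zero_mem B'
  | succ k ih =>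
    rintro b ⟨hb, hbk⟩
    rw [SetLike.mem_coe, mem_torsionBy_iff] at hbk
    have hxkb : x ^ k • b ∈ x ^ k • B ⊓ torsionBy R X x :=
      ⟨smul_mem_pointwise_smul _ _ _ hb, by rwa [SetLike.mem_coe, mem_torsionBy_iff, smul_smul,
        ← pow_succ']⟩
    obtain ⟨b', hb', hb'b⟩ := (mem_smul_pointwise_iff_exists _ _ _).1 (h k hxkb)
    have hdiff : b - b' ∈ B ⊓ torsionBy R X (x ^ k) :=
      ⟨sub_mem hb (hB' hb'), by rw [SetLike.mem_coe, mem_torsionBy_iff, smul_sub, hb'b, sub_self]⟩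
    simpa using add_mem (ih hdiff) hb'

theorem isArtinian_of_isArtinian_torsionBy (x : R) (htor : ∀ m : X, ∃ k : ℕ, x ^ k • m = 0)
    (hart : IsArtinian R (torsionBy R X x)) : IsArtinian R X := by
  rw [← monotone_stabilizes_iff_artinian]
  intro f
  set B : ℕ → Submodule R X := fun n => OrderDual.ofDual (f n)
  set F : ℕ → ℕ → Submodule R (torsionBy R X x) := fun n j =>
    comap (torsionBy R X x).subtype (x ^ j • B n)
  have hF : ∀ ⦃n n' j j'⦄, n ≤ n' → j ≤ j' → F n' j' ≤ F n j := by
    intro n n' j j' hn hj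
    refine comap_mono ?_
    obtain ⟨i, rfl⟩ := Nat.exists_eq_add_of_le hj
    calc x ^ (j + i) • B n' ≤ x ^ j • B n' := by
          rw [pow_add, mul_smul]
          exact smul_mono_right _ (smul_le_self_of_tower _ _)
      _ ≤ x ^ j • B n := smul_mono_right _ (f.monotone hn)
  obtain ⟨p, hp⟩ := WellFoundedLT.antitone_chain_condition₂ F hF
  refine ⟨p, fun n hn => le_antisymm (f.monotone hn) ?_⟩
  refine le_of_pow_smul_inf_torsionBy_le (B := B p) (fun b _ => htor b) (f.monotone hn)
    fun j m hm => ?_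
  have hmF : (⟨m, hm.2⟩ : torsionBy R X x) ∈ F p j := hm.1
  rw [← hp n hn j] at hmF
  exact hmF

theorem Submodule.coe_mem_torsionBySet_sup {I J : Ideal R}
    (m : torsionBySet R (torsionBySet R X I) J) :
    ((m : torsionBySet R X I) : X) ∈ torsionBySet R X ↑(I ⊔ J) := by
  refine (mem_torsionBySet_iff _ _).2 fun ⟨r, hr⟩ => ?_
  obtain ⟨i, hi, j, hj, rfl⟩ := mem_sup.1 hr
  have hmi := (mem_torsionBySet_iff _ _).1 (m : torsionBySet R X I).2 ⟨i, hi⟩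
  have hmj := congrArg Subtype.val ((mem_torsionBySet_iff _ _).1 m.2 ⟨j, hj⟩)
  simp_all [add_smul]

theorem isArtinian_of_isArtinian_torsionBySet {I : Ideal R} (hI : I.FG)
    (htor : ∀ m : X, ∃ k : ℕ, ∀ r ∈ I ^ k, r • m = 0)
    (hart : IsArtinian R (torsionBySet R X I)) : IsArtinian R X := by
  induction I, hI using Submodule.fg_induction generalizing X with
  | singleton x =>
    rw [torsionBySet_span_singleton_eq] at hart
    refine isArtinian_of_isArtinian_torsionBy x (fun m => ?_) hart
    obtain ⟨k, hk⟩ := htor m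
    exact ⟨k, hk _ (Ideal.pow_mem_pow (Ideal.mem_span_singleton_self x) k)⟩
  | sup I J _ _ hI hJ =>
    have torsion_of_le {K : Ideal R} (hK : K ≤ I ⊔ J) (m : X) :
        ∃ k : ℕ, ∀ r ∈ K ^ k, r • m = 0 := by
      obtain ⟨k, hk⟩ := htor m
      exact ⟨k, fun r hr => hk r (Ideal.pow_right_mono hK k hr)⟩
    refine hI (torsion_of_le le_sup_left) (hJ (fun m => ?_) ?_)
    · obtain ⟨k, hk⟩ := torsion_of_le le_sup_right (m : X)
      exact ⟨k, fun r hr => Subtype.ext (hk r hr)⟩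
    · refine isArtinian_of_injective (LinearMap.codRestrict _
        ((torsionBySet R X I).subtype ∘ₗ (torsionBySet R _ J).subtype) coe_mem_torsionBySet_sup)
        fun m m' h => ?_
      exact Subtype.ext (Subtype.ext (congrArg Subtype.val h :))

end Melkersson

/-- Melkersson's Lemma: if `X` is `a`-torsion and `(0 :_X a)` is Artinian, then `X` is
Artinian. -/
theorem stmt16 {R : Type} [CommRing R] [IsNoetherianRing R] (a : Ideal R)
    (X : Type) [AddCommGroup X] [Module R X]
    (htor : ∀ x : X, ∃ k : ℕ, ∀ r ∈ a ^ k, r • x = 0)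
    (hart : IsArtinian R (Submodule.torsionBySet R X ((a : Ideal R) : Set R))) :
    IsArtinian R X :=
  isArtinian_of_isArtinian_torsionBySet (IsNoetherian.noetherian a) htor hart
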